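/- arXiv:1209.5838 — 2 statements merged into one kernel-verified Lean document; each statement's English description precedes it below -/
import Mathlib

section
/- The covariance function c(u,v) of a product system is conditionally positive definite: for any finitely supported function ξ: U_E → ℂ with ∑_u ξ(u) = 0, one has ∑_{u,v} c(u,v) ξ(u) conj(ξ(v)) ≥ 0 (in particular this sum is real). -/
open scoped ComplexConjugate ComplexOrder
open Filter Topology

private lemma fin_double_sum {U : Type*} (s : Finset U) (P : U → U → ℂ) :
    ∑ i : Fin s.card, ∑ j : Fin s.card,
        P (s.equivFin.symm i : U) (s.equivFin.symm j : U)
      = ∑ u ∈ s, ∑ v ∈ s, P u v := by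
  rw [← Finset.sum_coe_sort s (fun u => ∑ v ∈ s, P u v),
    ← Equiv.sum_comp s.equivFin.symm (fun x : s => ∑ v ∈ s, P (x : U) v)]
  refine Finset.sum_congr rfl fun i _ => ?_
  rw [← Finset.sum_coe_sort s (fun v => P _ v),
    ← Equiv.sum_comp s.equivFin.symm (fun x : s => P _ (x : U))]

/-- The covariance function `c(u,v)` of a product system is conditionally
positive definite: for any finitely supported `ξ : U_E → ℂ` with `∑ ξ(u) = 0` one has
`∑_{u,v} c(u,v) ξ(u) conj(ξ(v)) ≥ 0` (the inequality in the order of `ℂ`, so in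
particular the sum is real).  The hypothesis is that for every `t > 0` the kernel
`(u,v) ↦ e^{t·c(u,v)} = ⟨u(t),v(t)⟩` is positive definite. -/
theorem stmt11 {U : Type*} (c : U → U → ℂ)
    (hpd : ∀ t : ℝ, 0 < t → ∀ (n : ℕ) (f : Fin n → U) (z : Fin n → ℂ),
      0 ≤ ∑ i, ∑ j, z i * conj (z j) * Complex.exp (t * c (f i) (f j)))
    (ξ : U →₀ ℂ) (hξ : ∑ u ∈ ξ.support, ξ u = 0) :
    0 ≤ ∑ u ∈ ξ.support, ∑ v ∈ ξ.support, c u v * ξ u * conj (ξ v) := by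
  classical
  set s := ξ.support with hs
  set a : U → U → ℂ := fun u v => ξ u * conj (ξ v) with ha
  set F : ℝ → ℂ := fun t => ∑ u ∈ s, ∑ v ∈ s, a u v * (Complex.exp (t * c u v) - 1)
    with hF
  have hsum0 : ∑ u ∈ s, ∑ v ∈ s, a u v = 0 := by
    have : ∑ u ∈ s, ∑ v ∈ s, a u v = (∑ u ∈ s, ξ u) * (∑ v ∈ s, conj (ξ v)) := by
      rw [Finset.sum_mul_sum]
    rw [this, hξ, zero_mul]
  have hF0 : F 0 = 0 := by
    simp [hF]
  have hFpos : ∀ t : ℝ, 0 < t → 0 ≤ F t := by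
    intro t ht
    have h1 := hpd t ht s.card (fun i => (s.equivFin.symm i : U))
      (fun i => ξ (s.equivFin.symm i : U))
    have h2 : (∑ i, ∑ j, (fun i => ξ (s.equivFin.symm i : U)) i *
          conj ((fun i => ξ (s.equivFin.symm i : U)) j) *
          Complex.exp (t * c ((s.equivFin.symm i : U)) ((s.equivFin.symm j : U))))
        = ∑ u ∈ s, ∑ v ∈ s, a u v * Complex.exp (t * c u v) :=
      fin_double_sum s (fun u v => a u v * Complex.exp (t * c u v))
    rw [h2] at h1
    have h3 : F t = (∑ u ∈ s, ∑ v ∈ s, a u v * Complex.exp (t * c u v))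
        - ∑ u ∈ s, ∑ v ∈ s, a u v := by
      rw [hF]
      simp only [mul_sub, mul_one, Finset.sum_sub_distrib]
    rw [h3, hsum0, sub_zero]
    exact h1
  set T : ℂ := ∑ u ∈ s, ∑ v ∈ s, a u v * c u v with hT
  have hderiv : HasDerivAt F T 0 := by
    rw [hF, hT]
    refine HasDerivAt.fun_sum fun u _ => HasDerivAt.fun_sum fun v _ => ?_
    have h1 : HasDerivAt (fun z : ℂ => Complex.exp (z * c u v))
        (Complex.exp ((0 : ℂ) * c u v) * (1 * c u v)) 0 :=
      ((hasDerivAt_id (0 : ℂ)).mul_const (c u v)).cexp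
    have h2 : HasDerivAt (fun t : ℝ => Complex.exp ((t : ℂ) * c u v))
        (Complex.exp ((0 : ℂ) * c u v) * (1 * c u v)) 0 := by
      simpa using h1.comp_ofReal
    have h3 := ((h2.sub_const 1).const_mul (a u v))
    exact h3.congr_deriv (by simp)
  have hslope : Tendsto (fun t : ℝ => t⁻¹ • F t) (𝓝[>] (0 : ℝ)) (𝓝 T) := by
    have h := hasDerivAt_iff_tendsto_slope.mp hderiv
    have hle : (𝓝[>] (0 : ℝ)) ≤ 𝓝[≠] (0 : ℝ) :=
      nhdsWithin_mono _ fun x hx => ne_of_gt hx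
    have := h.mono_left hle
    refine this.congr fun t => ?_
    simp [slope, hF0]
  have hre : Tendsto (fun t : ℝ => (t⁻¹ • F t).re) (𝓝[>] (0 : ℝ)) (𝓝 T.re) :=
    (Complex.continuous_re.tendsto T).comp hslope
  have him : Tendsto (fun t : ℝ => (t⁻¹ • F t).im) (𝓝[>] (0 : ℝ)) (𝓝 T.im) :=
    (Complex.continuous_im.tendsto T).comp hslope
  have hev : ∀ᶠ t in 𝓝[>] (0 : ℝ), 0 < t := eventually_mem_nhdsWithin
  have hTre : 0 ≤ T.re := by
    refine ge_of_tendsto hre ?_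
    filter_upwards [hev] with t ht
    have h0 := hFpos t ht
    rw [Complex.le_def] at h0
    have : (0:ℝ) ≤ (F t).re := by simpa using h0.1
    have := mul_nonneg (inv_nonneg.mpr ht.le) this
    simpa [Complex.smul_re] using this
  have hTim : T.im = 0 := by
    refine tendsto_nhds_unique him ?_
    refine Tendsto.congr' ?_ tendsto_const_nhds
    filter_upwards [hev] with t ht
    have h0 := hFpos t ht
    rw [Complex.le_def] at h0
    have : (F t).im = 0 := by simpa using h0.2.symm
    simp [Complex.smul_im, this]
  have hTpos : 0 ≤ T := by
    rw [Complex.le_def]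
    exact ⟨by simpa using hTre, by simp [hTim]⟩
  have : (∑ u ∈ s, ∑ v ∈ s, c u v * ξ u * conj (ξ v)) = T := by
    rw [hT]
    refine Finset.sum_congr rfl fun u _ => Finset.sum_congr rfl fun v _ => ?_
    simp [ha]; ring
  rw [this]
  exact hTpos
end

section
/- With (M, p, α) the minimal dilation of a normal ucp map P on N = pMp, for any harmonic elements a, b ∈ H^∞(N,P) the sequence P^n(ab) converges in the strong operator topology to p θ⁻¹(a) θ⁻¹(b) p (the Choi–Effros product a ∘ b), where θ(x) = pxp is the isomorphism of M^α onto H^∞(N,P). -/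
/-- With `(M, p, α)` the minimal dilation of a normal ucp map `P` on
`N = pMp`, for any harmonic elements `a, b ∈ H^∞(N,P)` the sequence `P^n(ab)` converges
in the strong operator topology to `p θ⁻¹(a) θ⁻¹(b) p` (the Choi–Effros product
`a ∘ b`), where `θ(x) = pxp` is the isomorphism of `M^α` onto `H^∞(N,P)`; below `x` and
`y` denote `θ⁻¹(a)` and `θ⁻¹(b)`. -/
theorem stmt16 {H : Type*} [NormedAddCommGroup H] [InnerProductSpace ℂ H]
    [CompleteSpace H]
    (M : StarSubalgebra ℂ (H →L[ℂ] H))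
    (p : H →L[ℂ] H) (hpM : p ∈ M) (hp_idem : p * p = p) (hp_sa : star p = p)
    (α : (H →L[ℂ] H) → (H →L[ℂ] H))
    (hαM : ∀ x ∈ M, α x ∈ M)
    (hα_add : ∀ x y, α (x + y) = α x + α y)
    (hα_smul : ∀ (c : ℂ) x, α (c • x) = c • α x)
    (hα_mul : ∀ x y, α (x * y) = α x * α y)
    (hα_star : ∀ x, α (star x) = star (α x))
    (hα_one : α 1 = 1)
    (hple : α p * p = p)
    (hα_sot : ∀ ξ : H, Filter.Tendsto (fun n : ℕ => (α^[n] p) ξ)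
      Filter.atTop (nhds ξ))
    (P : (H →L[ℂ] H) → (H →L[ℂ] H))
    (hP_dil : ∀ c : H →L[ℂ] H, c ∈ M → p * c * p = c →
      ∀ n : ℕ, P^[n] c = p * α^[n] c * p)
    (a b x y : H →L[ℂ] H)
    (haN : a ∈ M ∧ p * a * p = a) (hbN : b ∈ M ∧ p * b * p = b)
    (ha_harm : P a = a) (hb_harm : P b = b)
    (hx : x ∈ M) (hαx : α x = x) (hθx : p * x * p = a)
    (hy : y ∈ M) (hαy : α y = y) (hθy : p * y * p = b) :
    ∀ ξ : H, Filter.Tendsto (fun n : ℕ => (P^[n] (a * b)) ξ)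
      Filter.atTop (nhds ((p * x * y * p) ξ)) := by
  -- iterated multiplicativity
  have hαn_mul : ∀ n (u v : H →L[ℂ] H), α^[n] (u * v) = α^[n] u * α^[n] v := by
    intro n
    induction n with
    | zero => simp
    | succ n ih =>
      intro u v
      rw [Function.iterate_succ_apply', Function.iterate_succ_apply',
        Function.iterate_succ_apply', ← hα_mul, ih]
  have hαn_x : ∀ n, α^[n] x = x := by
    intro n; induction n with
    | zero => rfl
    | succ n ih => rw [Function.iterate_succ_apply', ih, hαx]
  have hαn_y : ∀ n, α^[n] y = y := by
    intro n; induction n with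
    | zero => rfl
    | succ n ih => rw [Function.iterate_succ_apply', ih, hαy]
  -- α^[n] p is self-adjoint
  have hαn_sa : ∀ n, star (α^[n] p) = α^[n] p := by
    intro n; induction n with
    | zero => exact hp_sa
    | succ n ih => rw [Function.iterate_succ_apply', ← hα_star, ih]
  -- α^[n] p * p = p
  have hpn : ∀ n, α^[n] p * p = p := by
    intro n; induction n with
    | zero => exact hp_idem
    | succ n ih =>
      have : α^[n+1] p * (α p * p) = α p * p := by
        rw [← mul_assoc]
        have h1 : α^[n+1] p * α p = α p := by
          have h := congrArg α ih
          rw [hα_mul] at h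
          rw [Function.iterate_succ_apply']
          exact h
        rw [h1]
      rwa [hple] at this
  have hpn' : ∀ n, p * α^[n] p = p := by
    intro n
    have := congrArg star (hpn n)
    rwa [star_mul, hαn_sa, hp_sa] at this
  -- a*b = p x p y p
  have hab : a * b = p * x * p * y * p := by
    rw [← hθx, ← hθy]
    simp only [mul_assoc]
    rw [← mul_assoc p p (y * p), hp_idem]
  have habM : a * b ∈ M := mul_mem haN.1 hbN.1
  have habN : p * (a * b) * p = a * b := by
    rw [hab]
    calc p * (p * x * p * y * p) * p
        = (p * p) * x * p * y * (p * p) := by noncomm_ring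
      _ = p * x * p * y * p := by rw [hp_idem]
  have key : ∀ n, P^[n] (a * b) = p * x * α^[n] p * y * p := by
    intro n
    rw [hP_dil (a * b) habM habN n, hab]
    have : α^[n] (p * x * p * y * p)
        = α^[n] p * x * α^[n] p * y * α^[n] p := by
      rw [hαn_mul, hαn_mul, hαn_mul, hαn_mul, hαn_x, hαn_y]
    rw [this]
    calc p * (α^[n] p * x * α^[n] p * y * α^[n] p) * p
        = (p * α^[n] p) * x * α^[n] p * y * (α^[n] p * p) := by noncomm_ring
      _ = p * x * α^[n] p * y * p := by rw [hpn, hpn']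
  intro ξ
  have h1 : Filter.Tendsto (fun n : ℕ => (α^[n] p) ((y * p) ξ))
      Filter.atTop (nhds ((y * p) ξ)) := hα_sot ((y * p) ξ)
  have h2 := ((p * x).continuous.tendsto ((y * p) ξ)).comp h1
  have heq : ∀ n : ℕ, (P^[n] (a * b)) ξ = (p * x) ((α^[n] p) ((y * p) ξ)) := by
    intro n
    rw [key n]
    simp [ContinuousLinearMap.mul_apply, mul_assoc]
  have heq2 : (p * x * y * p) ξ = (p * x) ((y * p) ξ) := by
    simp [ContinuousLinearMap.mul_apply, mul_assoc]
  rw [heq2]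
  simpa [heq, Function.comp_def] using h2
end
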